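/- arXiv:2403.08222 — 5 statements merged into one kernel-verified Lean document; each statement's English description precedes it below -/
import Mathlib

section
/- For distributions u1, u0 on {0,1,...,m}, there exists a joint distribution of a binary state ω ∈ {0,1} and m exchangeable binary signals with Pr[s_i = H | ω=1] = a and Pr[s_i = H | ω=0] = b, such that the number X of H-signals satisfies Pr[X=x | ω=1] = u1(x) and Pr[X=x | ω=0] = u0(x), if and only if E_{x∼u1}[x] = m·a and E_{x∼u0}[x] = m·b. -/
/-! Since `X = ∑ᵢ 1{sᵢ = H}`, its mean is the sum of the per-expert marginals, i.e. `m·a`.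
Conversely, spreading `u x` uniformly over the `m.choose x` profiles with `x` signals `H`
gives an exchangeable law whose count of `H` signals is distributed as `u`; by symmetry all
its marginals coincide, so each equals `E[X] / m`. -/

open Finset

section SignalProfiles

variable {ι : Type*} [Fintype ι]

def numH (s : ι → Bool) : ℕ := #{i | s i}

lemma numH_le_card (s : ι → Bool) : numH s ≤ Fintype.card ι := card_le_univ _

lemma numH_comp_perm (π : Equiv.Perm ι) (s : ι → Bool) : numH (s ∘ π) = numH s :=
  card_equiv π (by simp)

lemma card_filter_numH_eq [DecidableEq ι] (k : ℕ) :
    #{s : ι → Bool | numH s = k} = (Fintype.card ι).choose k := by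
  rw [← card_univ, ← card_powersetCard]
  refine card_nbij' (fun s => ({i | s i} : Finset ι)) (fun t i => decide (i ∈ t)) ?_ ?_ ?_ ?_
  · intro s hs
    rw [mem_coe, mem_filter] at hs
    rw [mem_coe, mem_powersetCard]
    exact ⟨subset_univ _, hs.2⟩
  · intro t ht
    rw [mem_coe, mem_powersetCard] at ht
    rw [mem_coe, mem_filter]
    simpa [numH] using ht.2
  · intro s _
    funext i
    simp
  · intro t _
    ext i
    simp

lemma sum_sum_filter_apply_eq_sum_numH_mul [DecidableEq ι] {R : Type*} [Semiring R]
    (P : (ι → Bool) → R) :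
    ∑ i, ∑ s with s i, P s = ∑ s, (numH s : R) * P s := by
  simp_rw [sum_filter]
  rw [sum_comm]
  refine sum_congr rfl fun s _ => ?_
  rw [← sum_filter, sum_const, nsmul_eq_mul]
  rfl

lemma sum_filter_apply_eq_of_perm_invariant [DecidableEq ι] {M : Type*} [AddCommMonoid M]
    (P : (ι → Bool) → M) (hP : ∀ (π : Equiv.Perm ι) s, P (s ∘ π) = P s) (i j : ι) :
    ∑ s with s i, P s = ∑ s with s j, P s := by
  refine sum_nbij' (· ∘ Equiv.swap i j) (· ∘ Equiv.swap i j) ?_ ?_ ?_ ?_ ?_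
  · simp
  · simp
  · intro s _
    funext k
    simp
  · intro s _
    funext k
    simp
  · intro s _
    exact (hP _ s).symm

lemma card_mul_sum_filter_apply_eq_of_perm_invariant [DecidableEq ι] {R : Type*} [Semiring R]
    (P : (ι → Bool) → R) (hP : ∀ (π : Equiv.Perm ι) s, P (s ∘ π) = P s) (i : ι) :
    Fintype.card ι * ∑ s with s i, P s = ∑ s, (numH s : R) * P s := by
  rw [← sum_sum_filter_apply_eq_sum_numH_mul,
    sum_congr rfl fun j _ => sum_filter_apply_eq_of_perm_invariant P hP j i,
    sum_const, card_univ, nsmul_eq_mul]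

end SignalProfiles

section CountLaw

variable {m : ℕ}

def numHFin (s : Fin m → Bool) : Fin (m + 1) :=
  ⟨numH s, Nat.lt_succ_of_le ((numH_le_card s).trans_eq (Fintype.card_fin m))⟩

lemma sum_mul_eq_sum_mul_sum_filter_numH {R : Type*} [CommSemiring R] (f : ℕ → R)
    (P : (Fin m → Bool) → R) :
    ∑ s, f (numH s) * P s = ∑ x : Fin (m + 1), f x * ∑ s with numH s = x, P s := by
  rw [← sum_fiberwise univ numHFin]
  refine sum_congr rfl fun x _ => ?_
  rw [mul_sum]
  refine sum_congr (by ext s; simp [numHFin, Fin.ext_iff]) fun s hs => ?_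
  rw [(mem_filter.1 hs).2]

noncomputable def layerUniform (u : Fin (m + 1) → ℝ) (s : Fin m → Bool) : ℝ :=
  u (numHFin s) / m.choose (numH s)

lemma layerUniform_nonneg {u : Fin (m + 1) → ℝ} (hu : ∀ x, 0 ≤ u x) (s : Fin m → Bool) :
    0 ≤ layerUniform u s :=
  div_nonneg (hu _) (Nat.cast_nonneg _)

lemma layerUniform_comp_perm (u : Fin (m + 1) → ℝ) (π : Equiv.Perm (Fin m))
    (s : Fin m → Bool) :
    layerUniform u (s ∘ π) = layerUniform u s := by
  simp only [layerUniform, numHFin, numH_comp_perm]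

lemma sum_filter_numH_layerUniform (u : Fin (m + 1) → ℝ) (x : Fin (m + 1)) :
    ∑ s with numH s = x, layerUniform u s = u x := by
  have hchoose : (m.choose x : ℝ) ≠ 0 := by
    exact_mod_cast (Nat.choose_pos (Nat.lt_succ_iff.mp x.isLt)).ne'
  calc ∑ s with numH s = x, layerUniform u s = ∑ s with numH s = x, u x / m.choose x := by
        refine sum_congr rfl fun s hs => ?_
        have hsx : numH s = x := (mem_filter.1 hs).2
        rw [layerUniform, show numHFin s = x from Fin.ext hsx, hsx]
    _ = u x := by
      rw [sum_const, card_filter_numH_eq, Fintype.card_fin, nsmul_eq_mul]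
      field_simp

lemma sum_layerUniform (u : Fin (m + 1) → ℝ) : ∑ s, layerUniform u s = ∑ x, u x := by
  simpa [sum_filter_numH_layerUniform] using
    sum_mul_eq_sum_mul_sum_filter_numH (fun _ => (1 : ℝ)) (layerUniform u)

lemma sum_mul_eq_mul_of_sum_filter_apply_eq {P : (Fin m → Bool) → ℝ} {a : ℝ}
    {u : Fin (m + 1) → ℝ} (hmarg : ∀ i, ∑ s with s i, P s = a)
    (hcount : ∀ x : Fin (m + 1), ∑ s with numH s = x, P s = u x) :
    ∑ x : Fin (m + 1), (x : ℝ) * u x = m * a := by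
  simp_rw [← hcount, ← sum_mul_eq_sum_mul_sum_filter_numH Nat.cast P,
    ← sum_sum_filter_apply_eq_sum_numH_mul, hmarg, sum_const, card_univ, Fintype.card_fin,
    nsmul_eq_mul]

lemma sum_filter_apply_layerUniform {u : Fin (m + 1) → ℝ} {a : ℝ}
    (hmean : ∑ x : Fin (m + 1), (x : ℝ) * u x = m * a) (i : Fin m) :
    ∑ s with s i, layerUniform u s = a := by
  have hm : (m : ℝ) ≠ 0 := by exact_mod_cast (Fin.pos i).ne'
  refine mul_left_cancel₀ hm ?_
  have hcard := card_mul_sum_filter_apply_eq_of_perm_invariant _ (layerUniform_comp_perm u) i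
  rw [Fintype.card_fin] at hcard
  rw [← hmean, hcard, sum_mul_eq_sum_mul_sum_filter_numH Nat.cast]
  simp_rw [sum_filter_numH_layerUniform]

end CountLaw

theorem stmt_0_general (m : ℕ) (a b : ℝ)
    (u1 u0 : Fin (m + 1) → ℝ)
    (hu1nn : ∀ x, 0 ≤ u1 x) (hu1sum : ∑ x, u1 x = 1)
    (hu0nn : ∀ x, 0 ≤ u0 x) (hu0sum : ∑ x, u0 x = 1) :
    (∃ P1 P0 : (Fin m → Bool) → ℝ,
      -- conditional distributions over signal profiles:
      (∀ s, 0 ≤ P1 s) ∧ (∑ s, P1 s = 1) ∧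
      (∀ s, 0 ≤ P0 s) ∧ (∑ s, P0 s = 1) ∧
      -- exchangeability:
      (∀ (π : Equiv.Perm (Fin m)) (s : Fin m → Bool), P1 (s ∘ π) = P1 s) ∧
      (∀ (π : Equiv.Perm (Fin m)) (s : Fin m → Bool), P0 (s ∘ π) = P0 s) ∧
      -- per-expert marginals:
      (∀ i : Fin m, ∑ s ∈ Finset.univ.filter (fun s : Fin m → Bool => s i), P1 s = a) ∧
      (∀ i : Fin m, ∑ s ∈ Finset.univ.filter (fun s : Fin m → Bool => s i), P0 s = b) ∧
      -- distribution of the number of H-signals: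
      (∀ x : Fin (m + 1),
        ∑ s ∈ Finset.univ.filter
            (fun s : Fin m → Bool =>
              (Finset.univ.filter (fun i => s i)).card = (x : ℕ)), P1 s = u1 x) ∧
      (∀ x : Fin (m + 1),
        ∑ s ∈ Finset.univ.filter
            (fun s : Fin m → Bool =>
              (Finset.univ.filter (fun i => s i)).card = (x : ℕ)), P0 s = u0 x))
    ↔ ((∑ x : Fin (m + 1), ((x : ℕ) : ℝ) * u1 x = m * a) ∧
       (∑ x : Fin (m + 1), ((x : ℕ) : ℝ) * u0 x = m * b)) := by
  constructor
  · rintro ⟨P1, P0, -, -, -, -, -, -, hmarg1, hmarg0, hcount1, hcount0⟩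
    exact ⟨sum_mul_eq_mul_of_sum_filter_apply_eq hmarg1 hcount1,
      sum_mul_eq_mul_of_sum_filter_apply_eq hmarg0 hcount0⟩
  · rintro ⟨hmean1, hmean0⟩
    exact ⟨layerUniform u1, layerUniform u0,
      layerUniform_nonneg hu1nn, (sum_layerUniform u1).trans hu1sum,
      layerUniform_nonneg hu0nn, (sum_layerUniform u0).trans hu0sum,
      layerUniform_comp_perm u1, layerUniform_comp_perm u0,
      sum_filter_apply_layerUniform hmean1, sum_filter_apply_layerUniform hmean0,
      sum_filter_numH_layerUniform u1, sum_filter_numH_layerUniform u0⟩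

/-- For probability distributions `u1, u0` on `{0,...,m}`, there
exists a joint distribution of a binary state `ω` and `m` exchangeable binary
signals (given by the conditional signal-profile distributions `P1` given `ω=1`
and `P0` given `ω=0`) with per-expert marginals `Pr[s_i = H | ω=1] = a` and
`Pr[s_i = H | ω=0] = b`, such that the number `X` of H-signals satisfies
`Pr[X=x | ω=1] = u1(x)` and `Pr[X=x | ω=0] = u0(x)`, if and only if
`E_{x∼u1}[x] = m·a` and `E_{x∼u0}[x] = m·b`. (A signal profile is a function
`Fin m → Bool` with `true` representing H.) -/
theorem stmt_0 (m : ℕ) (hm : 0 < m) (a b : ℝ)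
    (ha : a ∈ Set.Icc (0:ℝ) 1) (hb : b ∈ Set.Icc (0:ℝ) 1)
    (u1 u0 : Fin (m + 1) → ℝ)
    (hu1nn : ∀ x, 0 ≤ u1 x) (hu1sum : ∑ x, u1 x = 1)
    (hu0nn : ∀ x, 0 ≤ u0 x) (hu0sum : ∑ x, u0 x = 1) :
    (∃ P1 P0 : (Fin m → Bool) → ℝ,
      -- conditional distributions over signal profiles:
      (∀ s, 0 ≤ P1 s) ∧ (∑ s, P1 s = 1) ∧
      (∀ s, 0 ≤ P0 s) ∧ (∑ s, P0 s = 1) ∧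
      -- exchangeability:
      (∀ (π : Equiv.Perm (Fin m)) (s : Fin m → Bool), P1 (s ∘ π) = P1 s) ∧
      (∀ (π : Equiv.Perm (Fin m)) (s : Fin m → Bool), P0 (s ∘ π) = P0 s) ∧
      -- per-expert marginals:
      (∀ i : Fin m, ∑ s ∈ Finset.univ.filter (fun s : Fin m → Bool => s i), P1 s = a) ∧
      (∀ i : Fin m, ∑ s ∈ Finset.univ.filter (fun s : Fin m → Bool => s i), P0 s = b) ∧
      -- distribution of the number of H-signals:
      (∀ x : Fin (m + 1),
        ∑ s ∈ Finset.univ.filter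
            (fun s : Fin m → Bool =>
              (Finset.univ.filter (fun i => s i)).card = (x : ℕ)), P1 s = u1 x) ∧
      (∀ x : Fin (m + 1),
        ∑ s ∈ Finset.univ.filter
            (fun s : Fin m → Bool =>
              (Finset.univ.filter (fun i => s i)).card = (x : ℕ)), P0 s = u0 x))
    ↔ ((∑ x : Fin (m + 1), ((x : ℕ) : ℝ) * u1 x = m * a) ∧
       (∑ x : Fin (m + 1), ((x : ℕ) : ℝ) * u0 x = m * b)) :=
  stmt_0_general m a b u1 u0 hu1nn hu1sum hu0nn hu0sum
end

section
/- In the binary decision setting with L2 loss, if the prior μ is known but a, b are unknown (nature may choose any a > b), then the constant aggregator f(x) = μ is minimax optimal and the minimax regret equals μ(1−μ). -/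
lemma sum_ind_mul {m : ℕ} (g : Fin m → ℝ) (c : Fin m) :
    ∑ x, (if x = c then (1:ℝ) else 0) * g x = g c := by simp

lemma sum_two_mul {m : ℕ} (g : Fin m → ℝ) (c d : Fin m) (α β : ℝ) :
    ∑ x, (α * (if x = c then (1:ℝ) else 0) + β * (if x = d then (1:ℝ) else 0)) * g x
      = α * g c + β * g d := by
  simp [add_mul, Finset.sum_add_distrib, mul_assoc, ← Finset.mul_sum, sum_ind_mul]

lemma sum_mul_ind {m : ℕ} (g : Fin m → ℝ) (c : Fin m) :
    ∑ x, g x * (if x = c then (1:ℝ) else 0) = g c := by simp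

lemma sum_mul_two {m : ℕ} (g : Fin m → ℝ) (c d : Fin m) (α β : ℝ) :
    ∑ x, g x * (α * (if x = c then (1:ℝ) else 0) + β * (if x = d then (1:ℝ) else 0))
      = α * g c + β * g d := by
  simp [mul_add, Finset.sum_add_distrib, mul_left_comm, ← Finset.mul_sum, sum_mul_ind]
  ring

/-- Expected L2 loss of aggregator `f` on the count of H-reports, when the state
has prior `μ` and the count has conditional distributions `u1, u0`. -/
noncomputable def L2Loss (n : ℕ) (μ : ℝ) (f : ℕ → ℝ) (u1 u0 : Fin (n + 1) → ℝ) : ℝ :=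
  μ * ∑ x, u1 x * (f (x : ℕ) - 1) ^ 2 + (1 - μ) * ∑ x, u0 x * (f (x : ℕ) - 0) ^ 2

/-- Expected L2 loss of the omniscient Bayesian-posterior benchmark. -/
noncomputable def benchL2 (n : ℕ) (μ : ℝ) (u1 u0 : Fin (n + 1) → ℝ) : ℝ :=
  ∑ x, μ * (1 - μ) * u1 x * u0 x / (μ * u1 x + (1 - μ) * u0 x)

set_option maxHeartbeats 1000000

/-- In the binary decision setting with L2 loss, when the prior
`μ` is known but the conditional signal probabilities `a, b` are unknown (nature
may choose any `a > b`, i.e. any pair of conditional count distributions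
`u1, u0` with `E[u1] = na > nb = E[u0]`), the constant aggregator `f ≡ μ` is
minimax optimal and the minimax regret equals `μ(1-μ)`: the prior guess has
regret at most `μ(1-μ)` against every information structure with prior `μ`, and
every aggregator has worst-case regret at least `μ(1-μ)`. -/
theorem stmt_10 (n : ℕ) (hn : 3 ≤ n) (μ : ℝ) (hμ0 : 0 ≤ μ) (hμ1 : μ ≤ 1) :
    -- the prior guess guarantees regret at most μ(1-μ):
    (∀ (u1 u0 : Fin (n + 1) → ℝ),
      (∀ x, 0 ≤ u1 x) → (∑ x, u1 x = 1) →
      (∀ x, 0 ≤ u0 x) → (∑ x, u0 x = 1) →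
      (∑ x : Fin (n + 1), ((x : ℕ) : ℝ) * u0 x
        < ∑ x : Fin (n + 1), ((x : ℕ) : ℝ) * u1 x) →
      L2Loss n μ (fun _ => μ) u1 u0 - benchL2 n μ u1 u0 ≤ μ * (1 - μ)) ∧
    -- and no aggregator can guarantee less than μ(1-μ):
    (∀ f : ℕ → ℝ, (∀ x : ℕ, x ≤ n → f x ∈ Set.Icc (0:ℝ) 1) →
      ∀ ε : ℝ, 0 < ε →
      ∃ u1 u0 : Fin (n + 1) → ℝ,
        (∀ x, 0 ≤ u1 x) ∧ (∑ x, u1 x = 1) ∧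
        (∀ x, 0 ≤ u0 x) ∧ (∑ x, u0 x = 1) ∧
        (∑ x : Fin (n + 1), ((x : ℕ) : ℝ) * u0 x
          < ∑ x : Fin (n + 1), ((x : ℕ) : ℝ) * u1 x) ∧
        μ * (1 - μ) - ε < L2Loss n μ f u1 u0 - benchL2 n μ u1 u0) := by
  constructor
  · -- Part 1
    intro u1 u0 h1 h1s h0 h0s _
    have e1 : ∑ x : Fin (n+1), u1 x * (μ - 1)^2 = (μ - 1)^2 := by
      rw [← Finset.sum_mul, h1s, one_mul]
    have e0 : ∑ x : Fin (n+1), u0 x * (μ - 0)^2 = (μ - 0)^2 := by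
      rw [← Finset.sum_mul, h0s, one_mul]
    have hL : L2Loss n μ (fun _ => μ) u1 u0 = μ * (1 - μ) := by
      simp only [L2Loss]
      rw [e1, e0]; ring
    have hb : 0 ≤ benchL2 n μ u1 u0 := by
      apply Finset.sum_nonneg
      intro x _
      apply div_nonneg
      · exact mul_nonneg (mul_nonneg (mul_nonneg hμ0 (by linarith)) (h1 x)) (h0 x)
      · exact add_nonneg (mul_nonneg hμ0 (h1 x)) (mul_nonneg (by linarith) (h0 x))
    linarith
  · -- Part 2
    intro f hf ε hε
    obtain ⟨P0, hP0⟩ : ∃ p : Fin (n+1), (p : ℕ) = 0 := ⟨⟨0, by omega⟩, rfl⟩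
    obtain ⟨P1, hP1⟩ : ∃ p : Fin (n+1), (p : ℕ) = 1 := ⟨⟨1, by omega⟩, rfl⟩
    obtain ⟨Pn, hPn⟩ : ∃ p : Fin (n+1), (p : ℕ) = n := ⟨⟨n, by omega⟩, rfl⟩
    have hne10 : P1 ≠ P0 := by intro h; rw [h, hP0] at hP1; omega
    have hne1n : P1 ≠ Pn := by intro h; rw [h, hPn] at hP1; omega
    have hnR : (3:ℝ) ≤ (n:ℝ) := by exact_mod_cast hn
    obtain ⟨c, hc⟩ : ∃ c : ℝ, c = 1/(n:ℝ) := ⟨_, rfl⟩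
    have hc0 : 0 < c := by rw [hc]; positivity
    have hcn : c * (n:ℝ) = 1 := by rw [hc]; field_simp
    have hc3 : c ≤ 1/3 := by
      rw [hc, div_le_div_iff₀ (by linarith) (by norm_num)]; linarith
    obtain ⟨η, hη⟩ : ∃ η : ℝ, η = min (ε/2) (c/2) := ⟨_, rfl⟩
    have hη0 : 0 < η := hη ▸ lt_min (by linarith) (by linarith)
    have hηε : η ≤ ε/2 := hη ▸ min_le_left _ _
    have hηc : η ≤ c/2 := hη ▸ min_le_right _ _
    obtain ⟨hf00, hf01⟩ := hf 0 (by omega)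
    obtain ⟨hf10, hf11⟩ := hf 1 (by omega)
    obtain ⟨hfn0, hfn1⟩ := hf n le_rfl
    -- A + B ≥ 2 μ(1-μ)
    have hAB : 2*(μ*(1-μ)) ≤
        (μ*(1-c)*(1-f 0)^2 + (1-μ)*(f 1)^2 + μ*c*(1-f n)^2)
        + (μ*(1-f 1)^2 + (1-μ)*(1-c)*(f 0)^2 + (1-μ)*c*(f n)^2) := by
      nlinarith [mul_nonneg (by linarith : (0:ℝ) ≤ 1 - c) (sq_nonneg (f 0 - μ)),
        sq_nonneg (f 1 - μ), mul_nonneg hc0.le (sq_nonneg (f n - μ))]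
    rcases le_total (μ*(1-μ)) (μ*(1-c)*(1-f 0)^2 + (1-μ)*(f 1)^2 + μ*c*(1-f n)^2)
      with hA | hA
    · -- Structure I: u1 = (1-t)δ_0 + t δ_n, u0 = δ_1, t = c + η
      refine ⟨fun x => (1-(c+η)) * (if x = P0 then (1:ℝ) else 0)
          + (c+η) * (if x = Pn then (1:ℝ) else 0),
        fun x => if x = P1 then (1:ℝ) else 0, ?_, ?_, ?_, ?_, ?_, ?_⟩
      · intro x
        have ht1 : c + η ≤ 1 := by linarith
        have i0 : (0:ℝ) ≤ if x = P0 then (1:ℝ) else 0 := by split <;> norm_num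
        have i1 : (0:ℝ) ≤ if x = Pn then (1:ℝ) else 0 := by split <;> norm_num
        exact add_nonneg (mul_nonneg (by linarith) i0) (mul_nonneg (by linarith) i1)
      · have := sum_two_mul (fun _ : Fin (n+1) => (1:ℝ)) P0 Pn (1-(c+η)) (c+η)
        simpa using this
      · intro x; dsimp only; split <;> norm_num
      · simp
      · have hL : ∑ x : Fin (n+1), ((x:ℕ):ℝ) * (if x = P1 then (1:ℝ) else 0) = 1 := by
          rw [sum_mul_ind (fun x : Fin (n+1) => ((x:ℕ):ℝ)) P1, hP1]; norm_num
        have hR : ∑ x : Fin (n+1), ((x:ℕ):ℝ) *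
            ((1-(c+η)) * (if x = P0 then (1:ℝ) else 0)
              + (c+η) * (if x = Pn then (1:ℝ) else 0)) = (c+η) * (n:ℝ) := by
          rw [sum_mul_two (fun x : Fin (n+1) => ((x:ℕ):ℝ)) P0 Pn (1-(c+η)) (c+η),
            hP0, hPn]; ring
        rw [hL, hR]
        nlinarith [mul_pos hη0 (by linarith : (0:ℝ) < (n:ℝ))]
      · have e1 : ∑ x : Fin (n+1),
            ((1-(c+η)) * (if x = P0 then (1:ℝ) else 0)
              + (c+η) * (if x = Pn then (1:ℝ) else 0)) * (f (x:ℕ) - 1)^2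
            = (1-(c+η))*(f 0 - 1)^2 + (c+η)*(f n - 1)^2 := by
          have := sum_two_mul (fun x : Fin (n+1) => (f (x:ℕ) - 1)^2) P0 Pn (1-(c+η)) (c+η)
          rw [hP0, hPn] at this
          simpa using this
        have e0 : ∑ x : Fin (n+1),
            (if x = P1 then (1:ℝ) else 0) * (f (x:ℕ) - 0)^2 = (f 1 - 0)^2 := by
          have := sum_ind_mul (fun x : Fin (n+1) => (f (x:ℕ) - 0)^2) P1
          rw [hP1] at this
          simpa using this
        have hbench : benchL2 n μ
            (fun x => (1-(c+η)) * (if x = P0 then (1:ℝ) else 0)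
              + (c+η) * (if x = Pn then (1:ℝ) else 0))
            (fun x => if x = P1 then (1:ℝ) else 0) = 0 := by
          apply Finset.sum_eq_zero
          intro x _
          rcases eq_or_ne x P1 with h | h
          · simp [h, if_neg hne10, if_neg hne1n]
          · simp [if_neg h]
        have hLoss : L2Loss n μ f
            (fun x => (1-(c+η)) * (if x = P0 then (1:ℝ) else 0)
              + (c+η) * (if x = Pn then (1:ℝ) else 0))
            (fun x => if x = P1 then (1:ℝ) else 0)
            = μ * ((1-(c+η))*(f 0 - 1)^2 + (c+η)*(f n - 1)^2) + (1-μ) * (f 1 - 0)^2 := by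
          simp only [L2Loss]
          rw [e1, e0]
        rw [hLoss, hbench]
        have q1 : μ * (1-f 0)^2 ≤ 1 := by
          nlinarith [mul_nonneg (by linarith : (0:ℝ) ≤ 1-μ) (sq_nonneg (1 - f 0)),
            mul_nonneg hf00 (by linarith : (0:ℝ) ≤ 2 - f 0)]
        have k1 : μ*η*(1-f 0)^2 ≤ η := by
          calc μ*η*(1-f 0)^2 = η * (μ*(1-f 0)^2) := by ring
          _ ≤ η * 1 := mul_le_mul_of_nonneg_left q1 hη0.le
          _ = η := mul_one η
        have k2 : 0 ≤ μ*η*(1-f n)^2 :=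
          mul_nonneg (mul_nonneg hμ0 hη0.le) (sq_nonneg _)
        have key : μ * ((1-(c+η))*(f 0 - 1)^2 + (c+η)*(f n - 1)^2) + (1-μ) * (f 1 - 0)^2
            = (μ*(1-c)*(1-f 0)^2 + (1-μ)*(f 1)^2 + μ*c*(1-f n)^2)
              - μ*η*(1-f 0)^2 + μ*η*(1-f n)^2 := by ring
        linarith [hA, k1, k2, hηε, hε]
    · -- Structure II: u1 = δ_1, u0 = (1-s)δ_0 + s δ_n, s = c - η
      have hB : μ*(1-μ) ≤ μ*(1-f 1)^2 + (1-μ)*(1-c)*(f 0)^2 + (1-μ)*c*(f n)^2 := by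
        linarith
      refine ⟨fun x => if x = P1 then (1:ℝ) else 0,
        fun x => (1-(c-η)) * (if x = P0 then (1:ℝ) else 0)
          + (c-η) * (if x = Pn then (1:ℝ) else 0), ?_, ?_, ?_, ?_, ?_, ?_⟩
      · intro x; dsimp only; split <;> norm_num
      · simp
      · intro x
        have i0 : (0:ℝ) ≤ if x = P0 then (1:ℝ) else 0 := by split <;> norm_num
        have i1 : (0:ℝ) ≤ if x = Pn then (1:ℝ) else 0 := by split <;> norm_num
        exact add_nonneg (mul_nonneg (by linarith) i0) (mul_nonneg (by linarith) i1)
      · have := sum_two_mul (fun _ : Fin (n+1) => (1:ℝ)) P0 Pn (1-(c-η)) (c-η)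
        simpa using this
      · have hL : ∑ x : Fin (n+1), ((x:ℕ):ℝ) * (if x = P1 then (1:ℝ) else 0) = 1 := by
          rw [sum_mul_ind (fun x : Fin (n+1) => ((x:ℕ):ℝ)) P1, hP1]; norm_num
        have hR : ∑ x : Fin (n+1), ((x:ℕ):ℝ) *
            ((1-(c-η)) * (if x = P0 then (1:ℝ) else 0)
              + (c-η) * (if x = Pn then (1:ℝ) else 0)) = (c-η) * (n:ℝ) := by
          rw [sum_mul_two (fun x : Fin (n+1) => ((x:ℕ):ℝ)) P0 Pn (1-(c-η)) (c-η),
            hP0, hPn]; ring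
        rw [hL, hR]
        nlinarith [mul_pos hη0 (by linarith : (0:ℝ) < (n:ℝ))]
      · have e1 : ∑ x : Fin (n+1),
            (if x = P1 then (1:ℝ) else 0) * (f (x:ℕ) - 1)^2 = (f 1 - 1)^2 := by
          have := sum_ind_mul (fun x : Fin (n+1) => (f (x:ℕ) - 1)^2) P1
          rw [hP1] at this
          simpa using this
        have e0 : ∑ x : Fin (n+1),
            ((1-(c-η)) * (if x = P0 then (1:ℝ) else 0)
              + (c-η) * (if x = Pn then (1:ℝ) else 0)) * (f (x:ℕ) - 0)^2
            = (1-(c-η))*(f 0 - 0)^2 + (c-η)*(f n - 0)^2 := by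
          have := sum_two_mul (fun x : Fin (n+1) => (f (x:ℕ) - 0)^2) P0 Pn (1-(c-η)) (c-η)
          rw [hP0, hPn] at this
          simpa using this
        have hbench : benchL2 n μ
            (fun x => if x = P1 then (1:ℝ) else 0)
            (fun x => (1-(c-η)) * (if x = P0 then (1:ℝ) else 0)
              + (c-η) * (if x = Pn then (1:ℝ) else 0)) = 0 := by
          apply Finset.sum_eq_zero
          intro x _
          rcases eq_or_ne x P1 with h | h
          · simp [h, if_neg hne10, if_neg hne1n]
          · simp [if_neg h]
        have hLoss : L2Loss n μ f
            (fun x => if x = P1 then (1:ℝ) else 0)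
            (fun x => (1-(c-η)) * (if x = P0 then (1:ℝ) else 0)
              + (c-η) * (if x = Pn then (1:ℝ) else 0))
            = μ * (f 1 - 1)^2 + (1-μ) * ((1-(c-η))*(f 0 - 0)^2 + (c-η)*(f n - 0)^2) := by
          simp only [L2Loss]
          rw [e1, e0]
        rw [hLoss, hbench]
        have q1 : (1-μ) * (f n)^2 ≤ 1 := by
          nlinarith [mul_nonneg hμ0 (sq_nonneg (f n)),
            mul_nonneg hfn0 (by linarith : (0:ℝ) ≤ 2 - f n)]
        have k1 : (1-μ)*η*(f n)^2 ≤ η := by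
          calc (1-μ)*η*(f n)^2 = η * ((1-μ)*(f n)^2) := by ring
          _ ≤ η * 1 := mul_le_mul_of_nonneg_left q1 hη0.le
          _ = η := mul_one η
        have k2 : 0 ≤ (1-μ)*η*(f 0)^2 :=
          mul_nonneg (mul_nonneg (by linarith) hη0.le) (sq_nonneg _)
        have key : μ * (f 1 - 1)^2 + (1-μ) * ((1-(c-η))*(f 0 - 0)^2 + (c-η)*(f n - 0)^2)
            = (μ*(1-f 1)^2 + (1-μ)*(1-c)*(f 0)^2 + (1-μ)*c*(f n)^2)
              + (1-μ)*η*(f 0)^2 - (1-μ)*η*(f n)^2 := by ring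
        linarith [hB, k1, k2, hηε, hε]
end

section
/- For every probability distribution u on {0,1,...,n} with mean c, there exist finitely many probability distributions t_1,...,t_m on {0,...,n}, each with support of size at most 2 and each with mean c, and nonnegative weights λ_1,...,λ_m summing to 1, such that u = Σ_i λ_i t_i. -/
/-!
Fix a linear map `L` into an `r`-dimensional space and consider the compact convex set of
probability vectors `t` with `L t = c`. If `t` is an extreme point, there is no nonzero `d`
supported in `supp t` with `∑ d = 0` and `L d = 0`, since `t ± ε d` would stay in the set for
small `ε`. So these `r + 1` linear conditions are injective on functions supported in `supp t`,
which forces `#supp t ≤ r + 1`; applied to `d = t - t'`, the same fact shows that an extreme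
point is determined by its support. Hence there are finitely many extreme points, and by
Krein–Milman the set is their convex hull. The theorem is the case where `L` is the mean, `r = 1`.
-/
open Finset Module Filter Topology Function

variable {ι F : Type*} [Fintype ι]

lemma exists_pos_nonneg_add_mul_of_support_subset {t d : ι → ℝ} (ht : ∀ x, 0 ≤ t x)
    (hd : support d ⊆ support t) :
    ∃ ε > 0, ∀ x, 0 ≤ t x + ε * d x ∧ 0 ≤ t x + -ε * d x := by
  have hnhds : ∀ᶠ ε in 𝓝 (0 : ℝ), ∀ x, 0 ≤ t x + ε * d x := by
    refine eventually_all.2 fun x => ?_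
    by_cases htx : t x = 0
    · have hdx : d x = 0 := not_not.1 fun h => hd h htx
      simp [htx, hdx]
    · have hlim : Tendsto (fun ε : ℝ => t x + ε * d x) (𝓝 0) (𝓝 (t x)) :=
        (by fun_prop : Continuous fun ε : ℝ => t x + ε * d x).tendsto' 0 (t x) (by simp)
      exact (hlim.eventually (lt_mem_nhds ((ht x).lt_of_ne' htx))).mono fun _ h => h.le
  obtain ⟨δ, hδ, hball⟩ := Metric.eventually_nhds_iff.1 hnhds
  have hclose : ∀ ε : ℝ, |ε| < δ → ∀ x, 0 ≤ t x + ε * d x := fun ε hε =>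
    hball (by simpa using hε)
  refine ⟨δ / 2, by positivity, fun x => ⟨hclose _ ?_ x, hclose _ ?_ x⟩⟩
  · rw [abs_of_pos (by positivity)]; linarith
  · rw [abs_neg, abs_of_pos (by positivity)]; linarith

section Algebraic

variable [AddCommGroup F] [Module ℝ F]

def simplexSlice (L : (ι → ℝ) →ₗ[ℝ] F) (c : F) : Set (ι → ℝ) :=
  stdSimplex ℝ ι ∩ L ⁻¹' {c}

variable {L : (ι → ℝ) →ₗ[ℝ] F} {c : F}

lemma convex_simplexSlice : Convex ℝ (simplexSlice L c) :=
  (convex_stdSimplex ℝ ι).inter ((convex_singleton c).linear_preimage L)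

lemma eq_zero_of_mem_extremePoints_simplexSlice {t d : ι → ℝ}
    (ht : t ∈ (simplexSlice L c).extremePoints ℝ) (hd : support d ⊆ support t)
    (hsum : ∑ x, d x = 0) (hL : L d = 0) : d = 0 := by
  have hmem : ∀ s : ℝ, (∀ x, 0 ≤ t x + s * d x) → t + s • d ∈ simplexSlice L c := by
    intro s hs
    obtain ⟨⟨-, ht1⟩, htc⟩ := ht.1
    refine ⟨⟨by simpa using hs, ?_⟩, ?_⟩
    · simp [sum_add_distrib, ← mul_sum, ht1, hsum]
    · simpa [hL] using htc
  obtain ⟨ε, hε, hpos⟩ := exists_pos_nonneg_add_mul_of_support_subset ht.1.1.1 hd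
  have hmid : t ∈ openSegment ℝ (t + ε • d) (t + -ε • d) :=
    ⟨1 / 2, 1 / 2, by norm_num, by norm_num, by norm_num, by
      ext x; simp only [Pi.add_apply, Pi.smul_apply, smul_eq_mul]; ring⟩
  have heq := ht.2 (hmem ε fun x => (hpos x).1) (hmem (-ε) fun x => (hpos x).2) hmid
  simpa [hε.ne'] using heq

lemma card_support_le_of_mem_extremePoints_simplexSlice [FiniteDimensional ℝ F] {t : ι → ℝ}
    (ht : t ∈ (simplexSlice L c).extremePoints ℝ) :
    #{x | t x ≠ 0} ≤ finrank ℝ F + 1 := by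
  classical
  by_contra! hcard
  let E := ExtendByZero.linearMap ℝ (Subtype.val : {x // t x ≠ 0} → ι)
  let M := (L ∘ₗ E).prod (Fintype.linearCombination ℝ (fun _ : ι => (1 : ℝ)) ∘ₗ E)
  have hrank : finrank ℝ (F × ℝ) < finrank ℝ ({x // t x ≠ 0} → ℝ) := by
    rwa [finrank_prod, finrank_self, finrank_fintype_fun_eq_card, Fintype.card_subtype]
  obtain ⟨d, hdker, hd0⟩ :=
    Submodule.exists_mem_ne_zero_of_ne_bot (LinearMap.ker_ne_bot_of_finrank_lt (f := M) hrank)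
  have hsupp : support (E d) ⊆ support t := by
    intro x hx
    by_contra htx
    have hx_out : ¬∃ y : {x // t x ≠ 0}, (y : ι) = x := fun ⟨y, hyx⟩ => htx (hyx ▸ y.2)
    exact hx (by simp [E, extend_apply' _ _ _ hx_out])
  have hMd : L (E d) = 0 ∧ ∑ x, E d x = 0 := by
    simpa [M, Prod.ext_iff, Fintype.linearCombination_apply] using hdker
  have hEd := eq_zero_of_mem_extremePoints_simplexSlice ht hsupp hMd.2 hMd.1
  refine hd0 (funext fun y => ?_)
  simpa [E, Subtype.val_injective.extend_apply] using congrFun hEd y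

lemma eq_of_mem_extremePoints_simplexSlice_of_support_subset {t t' : ι → ℝ}
    (ht : t ∈ (simplexSlice L c).extremePoints ℝ) (ht' : t' ∈ simplexSlice L c)
    (hsupp : support t' ⊆ support t) : t' = t := by
  have hsub : support (t - t') ⊆ support t := fun x hx htx => hx (by
    have ht'x : t' x = 0 := not_not.1 fun h => hsupp h htx
    simp [htx, ht'x])
  have hsum : ∑ x, (t - t') x = 0 := by
    simp [sum_sub_distrib, ht.1.1.2, ht'.1.2]
  have hL : L (t - t') = 0 := by
    rw [map_sub, ht.1.2, ht'.2, sub_self]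
  exact (sub_eq_zero.1 (eq_zero_of_mem_extremePoints_simplexSlice ht hsub hsum hL)).symm

lemma finite_extremePoints_simplexSlice : ((simplexSlice L c).extremePoints ℝ).Finite :=
  Set.Finite.of_finite_image (f := support) (Set.toFinite _) fun _ ht _ ht' hsupp =>
    eq_of_mem_extremePoints_simplexSlice_of_support_subset ht' ht.1 hsupp.le

end Algebraic

section Topological

variable [NormedAddCommGroup F] [NormedSpace ℝ F] {L : (ι → ℝ) →ₗ[ℝ] F} {c : F}

lemma isCompact_simplexSlice : IsCompact (simplexSlice L c) :=
  (isCompact_stdSimplex ℝ ι).inter_right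
    (isClosed_singleton.preimage (LinearMap.continuous_of_finiteDimensional L))

lemma convexHull_extremePoints_simplexSlice :
    convexHull ℝ ((simplexSlice L c).extremePoints ℝ) = simplexSlice L c := by
  rw [← (finite_extremePoints_simplexSlice.isClosed_convexHull ℝ).closure_eq]
  exact closure_convexHull_extremePoints isCompact_simplexSlice convex_simplexSlice

end Topological

lemma exists_fin_of_mem_convexHull {E : Type*} [AddCommGroup E] [Module ℝ E] {s : Set E} {x : E}
    (hx : x ∈ convexHull ℝ s) :
    ∃ (m : ℕ) (w : Fin m → ℝ) (z : Fin m → E), (∀ i, 0 ≤ w i) ∧ ∑ i, w i = 1 ∧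
      (∀ i, z i ∈ s) ∧ ∑ i, w i • z i = x := by
  obtain ⟨κ, _, w, z, hw₀, hw₁, hz, hwz⟩ := mem_convexHull_iff_exists_fintype.1 hx
  let e := (Fintype.equivFin κ).symm
  exact ⟨_, w ∘ e, z ∘ e, fun i => hw₀ _, by simpa [e.sum_comp] using hw₁, fun i => hz _,
    by simpa [e.sum_comp (fun i => w i • z i)] using hwz⟩

/-- Every probability distribution `u` on `{0,1,...,n}` with mean
`c` is a finite convex combination of probability distributions on `{0,...,n}`
each having support of size at most 2 and mean `c`. -/
theorem stmt_12 (n : ℕ) (c : ℝ) (u : Fin (n + 1) → ℝ)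
    (hunn : ∀ x, 0 ≤ u x) (husum : ∑ x, u x = 1)
    (humean : ∑ x : Fin (n + 1), ((x : ℕ) : ℝ) * u x = c) :
    ∃ (m : ℕ) (t : Fin m → Fin (n + 1) → ℝ) (lam : Fin m → ℝ),
      (∀ i, ∀ x, 0 ≤ t i x) ∧
      (∀ i, ∑ x, t i x = 1) ∧
      (∀ i, (Finset.univ.filter (fun x => t i x ≠ 0)).card ≤ 2) ∧
      (∀ i, ∑ x : Fin (n + 1), ((x : ℕ) : ℝ) * t i x = c) ∧
      (∀ i, 0 ≤ lam i) ∧ (∑ i, lam i = 1) ∧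
      (∀ x, u x = ∑ i, lam i * t i x) := by
  let mean := Fintype.linearCombination ℝ (fun x : Fin (n + 1) => ((x : ℕ) : ℝ))
  have hmean : ∀ t, mean t = ∑ x : Fin (n + 1), ((x : ℕ) : ℝ) * t x := fun t => by
    simp [mean, Fintype.linearCombination_apply, mul_comm]
  have hu : u ∈ convexHull ℝ ((simplexSlice mean c).extremePoints ℝ) := by
    rw [convexHull_extremePoints_simplexSlice]
    exact ⟨⟨hunn, husum⟩, by simpa [hmean] using humean⟩
  obtain ⟨m, lam, t, hlam₀, hlam₁, ht, rfl⟩ := exists_fin_of_mem_convexHull hu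
  refine ⟨m, t, lam, fun i => (ht i).1.1.1, fun i => (ht i).1.1.2, fun i => ?_,
    fun i => (hmean _).symm.trans (ht i).1.2, hlam₀, hlam₁, fun x => by simp⟩
  simpa using card_support_le_of_mem_extremePoints_simplexSlice (ht i)
end

section
/- Let ℓ: [0,1] → [0,∞) be convex and decreasing with ℓ(1) = 0, and let m ≥ 2. If f ∈ ℝ^m satisfies f_i ≥ 0 and Σ_i f_i = 1, then Σ_i ℓ(f_i)/m ≥ ℓ(1/m); in particular there exists i with ℓ(f_i) ≥ ℓ(1/m). Consequently, if an adversary can force the aggregator to observe identical reports regardless of which of m states is true (while a benchmark achieves zero loss), every aggregator suffers regret at least ℓ(1/m), attained by the uniform prediction. -/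
/-- Let `ℓ : [0,1] → [0,∞)` be convex and decreasing with
`ℓ(1) = 0`, and let `m ≥ 2`. If `f ∈ ℝ^m` satisfies `f_i ≥ 0` and `Σ_i f_i = 1`,
then `Σ_i ℓ(f_i)/m ≥ ℓ(1/m)`; in particular there exists `i` with
`ℓ(f_i) ≥ ℓ(1/m)`. Consequently, if an adversary can force the aggregator to
observe identical reports regardless of which of `m` states is true (so that the
aggregator must answer with a single probability vector `f` while the benchmark
achieves zero loss), the aggregator's worst-case (over the true state, under the
uniform prior) regret is at least `ℓ(1/m)`, which is attained by the uniform
prediction `f_i = 1/m`. -/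
theorem stmt_16 (ℓ : ℝ → ℝ) (m : ℕ) (hm : 2 ≤ m)
    (hconv : ConvexOn ℝ (Set.Icc (0:ℝ) 1) ℓ)
    (hdec : AntitoneOn ℓ (Set.Icc (0:ℝ) 1))
    (hnn : ∀ y ∈ Set.Icc (0:ℝ) 1, 0 ≤ ℓ y)
    (hℓ1 : ℓ 1 = 0) :
    (∀ f : Fin m → ℝ, (∀ i, 0 ≤ f i) → (∑ i, f i = 1) →
      (∑ i, ℓ (f i)) / m ≥ ℓ (1 / m) ∧ ∃ i, ℓ (f i) ≥ ℓ (1 / m)) ∧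
    -- the uniform prediction attains regret exactly ℓ(1/m):
    (∑ _i : Fin m, ℓ (1 / m)) / m = ℓ (1 / m) := by
  have hm0 : (0:ℝ) < m := by positivity
  constructor
  · intro f hnnf hsum
    have hfle : ∀ i, f i ≤ 1 := by
      intro i
      calc f i ≤ ∑ j, f j := Finset.single_le_sum (fun j _ => hnnf j) (Finset.mem_univ i)
        _ = 1 := hsum
    have key : ℓ (∑ i, (1/(m:ℝ)) • f i) ≤ ∑ i, (1/(m:ℝ)) • ℓ (f i) := by
      apply hconv.map_sum_le (fun i _ => by positivity)
        (by simp [Finset.sum_div]; field_simp)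
        (fun i _ => ⟨hnnf i, hfle i⟩)
    have h1 : ∑ i, (1/(m:ℝ)) • f i = 1 / m := by
      simp only [smul_eq_mul, ← Finset.mul_sum, hsum, mul_one]
    have h2 : ∑ i, (1/(m:ℝ)) • ℓ (f i) = (∑ i, ℓ (f i)) / m := by
      simp only [smul_eq_mul, ← Finset.mul_sum]; ring
    rw [h1, h2] at key
    refine ⟨key, ?_⟩
    haveI : Nonempty (Fin m) := ⟨⟨0, by omega⟩⟩
    have hsle : ∑ _i : Fin m, ℓ (1/(m:ℝ)) ≤ ∑ i, ℓ (f i) := by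
      have : ∑ _i : Fin m, ℓ (1/(m:ℝ)) = m * ℓ (1/m) := by
        simp [Finset.sum_const, mul_comm]
      rw [this]
      calc (m:ℝ) * ℓ (1/m) ≤ m * ((∑ i, ℓ (f i)) / m) := by
            exact mul_le_mul_of_nonneg_left key (le_of_lt hm0)
        _ = ∑ i, ℓ (f i) := by field_simp
    obtain ⟨i, _, hi⟩ := Finset.exists_le_of_sum_le Finset.univ_nonempty hsle
    exact ⟨i, hi⟩
  · rw [Finset.sum_const]
    simp
    field_simp
end

section
/- In the conditionally independent binary-state setting with L2 loss and at least one omniscient adversary (k ≥ 1), the minimax regret equals 1/4 for every number n of experts. -/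
/-!
The constant aggregator `1/2` loses exactly `1/4` against every information structure, and the
benchmark loss is nonnegative. Conversely, let one expert learn the state exactly and the others
nothing (prior `1/2`), and let one adversary report what the informed expert would report in the
other state, the other adversaries reporting `1/2`. Both states then present the same multiset of
reports, so an anonymous aggregator outputs the same `y` in both and loses
`(y - 1)²/2 + y²/2 ≥ 1/4`, while the benchmark, which follows the informed expert, loses `0`.
-/

/-- The truthful experts' posterior reports in a conditionally independent
structure: expert `i` with signal `sv i` reports the posterior
`μ·P1 i (sv i) / (μ·P1 i (sv i) + (1-μ)·P0 i (sv i))`. -/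
noncomputable def ciReports {S : Type} {nt : ℕ} (μ : ℝ) (P1 P0 : Fin nt → S → ℝ)
    (sv : Fin nt → S) : Fin nt → ℝ :=
  fun i => μ * P1 i (sv i) / (μ * P1 i (sv i) + (1 - μ) * P0 i (sv i))

/-- Expected L2 loss of the (possibly non-anonymous) aggregator `f` observing
the `nt` truthful posterior reports followed by the `k` adversarial reports
`σ ω sv` (the adversaries see the state and every truthful signal). -/
noncomputable def ciLoss {S : Type} [Fintype S] {nt k : ℕ} (μ : ℝ)
    (P1 P0 : Fin nt → S → ℝ) (f : (Fin (nt + k) → ℝ) → ℝ)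
    (σ : Bool → (Fin nt → S) → Fin k → ℝ) : ℝ :=
  μ * ∑ sv : Fin nt → S, (∏ i, P1 i (sv i)) *
      (f (Fin.append (ciReports μ P1 P0 sv) (σ true sv)) - 1) ^ 2
    + (1 - μ) * ∑ sv : Fin nt → S, (∏ i, P0 i (sv i)) *
      (f (Fin.append (ciReports μ P1 P0 sv) (σ false sv)) - 0) ^ 2

/-- Expected L2 loss of the omniscient benchmark: the infimum of the expected
loss over all aggregators of the truthful reports, given full knowledge of the
information structure. -/
noncomputable def ciBench {S : Type} [Fintype S] {nt : ℕ} (μ : ℝ)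
    (P1 P0 : Fin nt → S → ℝ) : ℝ :=
  sInf {L : ℝ | ∃ g : (Fin nt → ℝ) → ℝ,
    L = μ * ∑ sv : Fin nt → S, (∏ i, P1 i (sv i)) *
          (g (ciReports μ P1 P0 sv) - 1) ^ 2
      + (1 - μ) * ∑ sv : Fin nt → S, (∏ i, P0 i (sv i)) *
          (g (ciReports μ P1 P0 sv) - 0) ^ 2}


open Finset Function

theorem Fin.append_comp_swap_castAdd_natAdd {α : Type*} {m n : ℕ} (u : Fin m → α)
    (v : Fin n → α) (i : Fin m) (j : Fin n) :
    Fin.append u v ∘ Equiv.swap (Fin.castAdd n i) (Fin.natAdd m j) =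
      Fin.append (update u i (v j)) (update v j (u i)) := by
  have hne : ∀ (i' : Fin m) (j' : Fin n), Fin.castAdd n i' ≠ Fin.natAdd m j' := by
    intro i' j' h
    have := congrArg Fin.val h
    simp only [Fin.val_castAdd, Fin.val_natAdd] at this
    omega
  funext p
  refine Fin.addCases (fun i' => ?_) (fun j' => ?_) p
  · rcases eq_or_ne i' i with rfl | h
    · simp
    · rw [comp_apply, Equiv.swap_apply_of_ne_of_ne ((Fin.castAdd_injective _ _).ne h) (hne _ _)]
      simp [h]
  · rcases eq_or_ne j' j with rfl | h
    · simp
    · rw [comp_apply, Equiv.swap_apply_of_ne_of_ne (hne _ _).symm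
        ((Fin.natAdd_injective _ _).ne h)]
      simp [h]

section ProductDistributions

variable {ι S R : Type*} [Fintype ι] [DecidableEq ι] [Fintype S] [CommSemiring R]

theorem sum_prod_apply_eq_one {P : ι → S → R} (hP : ∀ i, ∑ s, P i s = 1) :
    ∑ sv : ι → S, ∏ i, P i (sv i) = 1 := by
  rw [← Fintype.prod_sum]
  simp [hP]

variable [DecidableEq S]

theorem sum_prod_single_mul (a : ι → S) (F : (ι → S) → R) :
    ∑ sv : ι → S, (∏ i, (Pi.single (a i) 1 : S → R) (sv i)) * F sv = F a := by
  rw [Fintype.sum_eq_single a fun sv h => ?_]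
  · simp
  · obtain ⟨i, hi⟩ := ne_iff.mp h
    rw [prod_eq_zero (mem_univ i) (by simp [hi]), zero_mul]

end ProductDistributions

section Losses

variable {S : Type} [Fintype S] {nt k : ℕ} {μ : ℝ} {P1 P0 : Fin nt → S → ℝ}

variable (μ P1 P0) in
noncomputable def ciTruthfulLoss (g : (Fin nt → ℝ) → ℝ) : ℝ :=
  μ * ∑ sv : Fin nt → S, (∏ i, P1 i (sv i)) * (g (ciReports μ P1 P0 sv) - 1) ^ 2
    + (1 - μ) * ∑ sv : Fin nt → S, (∏ i, P0 i (sv i)) * (g (ciReports μ P1 P0 sv) - 0) ^ 2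

theorem ciTruthfulLoss_nonneg (hμ0 : 0 ≤ μ) (hμ1 : μ ≤ 1) (hP1 : ∀ i s, 0 ≤ P1 i s)
    (hP0 : ∀ i s, 0 ≤ P0 i s) (g : (Fin nt → ℝ) → ℝ) : 0 ≤ ciTruthfulLoss μ P1 P0 g := by
  have weighted_nonneg {P : Fin nt → S → ℝ} (hP : ∀ i s, 0 ≤ P i s) (y : ℝ) :
      0 ≤ ∑ sv : Fin nt → S, (∏ i, P i (sv i)) * (g (ciReports μ P1 P0 sv) - y) ^ 2 :=
    sum_nonneg fun sv _ => mul_nonneg (prod_nonneg fun i _ => hP i (sv i)) (sq_nonneg _)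
  exact add_nonneg (mul_nonneg hμ0 (weighted_nonneg hP1 1))
    (mul_nonneg (sub_nonneg.mpr hμ1) (weighted_nonneg hP0 0))

theorem ciBench_nonneg (hμ0 : 0 ≤ μ) (hμ1 : μ ≤ 1) (hP1 : ∀ i s, 0 ≤ P1 i s)
    (hP0 : ∀ i s, 0 ≤ P0 i s) : 0 ≤ ciBench μ P1 P0 :=
  Real.sInf_nonneg <| by
    rintro _ ⟨g, rfl⟩
    exact ciTruthfulLoss_nonneg hμ0 hμ1 hP1 hP0 g

theorem ciBench_le_ciTruthfulLoss (hμ0 : 0 ≤ μ) (hμ1 : μ ≤ 1) (hP1 : ∀ i s, 0 ≤ P1 i s)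
    (hP0 : ∀ i s, 0 ≤ P0 i s) (g : (Fin nt → ℝ) → ℝ) :
    ciBench μ P1 P0 ≤ ciTruthfulLoss μ P1 P0 g := by
  refine csInf_le ⟨0, ?_⟩ ⟨g, rfl⟩
  rintro _ ⟨g, rfl⟩
  exact ciTruthfulLoss_nonneg hμ0 hμ1 hP1 hP0 g

theorem ciLoss_const (hP1 : ∀ i, ∑ s, P1 i s = 1) (hP0 : ∀ i, ∑ s, P0 i s = 1) (c : ℝ)
    (σ : Bool → (Fin nt → S) → Fin k → ℝ) :
    ciLoss μ P1 P0 (fun _ => c) σ = μ * (c - 1) ^ 2 + (1 - μ) * c ^ 2 := by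
  simp only [ciLoss, ← sum_mul, sum_prod_apply_eq_one hP1, sum_prod_apply_eq_one hP0, sub_zero,
    one_mul]

end Losses

section PointMasses

variable {S : Type} [DecidableEq S] {nt k : ℕ}

noncomputable def pointMasses {ι : Type*} (a : ι → S) : ι → S → ℝ := fun i => Pi.single (a i) 1

theorem pointMasses_nonneg {ι : Type*} (a : ι → S) (i : ι) (s : S) : 0 ≤ pointMasses a i s := by
  unfold pointMasses
  rw [Pi.single_apply]
  split_ifs <;> norm_num

theorem ciReports_pointMasses_left {μ : ℝ} (hμ : μ ≠ 0) (a1 a0 : Fin nt → S) (i : Fin nt) :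
    ciReports μ (pointMasses a1) (pointMasses a0) a1 i = if a1 i = a0 i then μ else 1 := by
  by_cases h : a1 i = a0 i <;> simp [ciReports, pointMasses, h, hμ]

theorem ciReports_pointMasses_right (μ : ℝ) (a1 a0 : Fin nt → S) (i : Fin nt) :
    ciReports μ (pointMasses a1) (pointMasses a0) a0 i = if a1 i = a0 i then μ else 0 := by
  by_cases h : a1 i = a0 i <;> simp [ciReports, pointMasses, h, eq_comm]

variable [Fintype S]

theorem sum_pointMasses {ι : Type*} (a : ι → S) (i : ι) : ∑ s, pointMasses a i s = 1 := by
  simp [pointMasses]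

theorem ciLoss_pointMasses (μ : ℝ) (a1 a0 : Fin nt → S) (f : (Fin (nt + k) → ℝ) → ℝ)
    (σ : Bool → (Fin nt → S) → Fin k → ℝ) :
    ciLoss μ (pointMasses a1) (pointMasses a0) f σ =
      μ * (f (Fin.append (ciReports μ (pointMasses a1) (pointMasses a0) a1) (σ true a1)) - 1) ^ 2
        + (1 - μ) *
          (f (Fin.append (ciReports μ (pointMasses a1) (pointMasses a0) a0) (σ false a0)) - 0) ^ 2 := by
  simp only [ciLoss, pointMasses, sum_prod_single_mul]

theorem ciTruthfulLoss_pointMasses (μ : ℝ) (a1 a0 : Fin nt → S) (g : (Fin nt → ℝ) → ℝ) :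
    ciTruthfulLoss μ (pointMasses a1) (pointMasses a0) g =
      μ * (g (ciReports μ (pointMasses a1) (pointMasses a0) a1) - 1) ^ 2
        + (1 - μ) * (g (ciReports μ (pointMasses a1) (pointMasses a0) a0) - 0) ^ 2 := by
  simp only [ciTruthfulLoss, pointMasses, sum_prod_single_mul]

end PointMasses

section Mirror

variable {nt k : ℕ}

noncomputable def mirrorAdversary (j₀ : Fin k) : Bool → (Fin nt → Bool) → Fin k → ℝ :=
  fun ω _ => update (fun _ => 1 / 2) j₀ (if ω then 0 else 1)

theorem mirrorAdversary_mem_Icc (j₀ : Fin k) (ω : Bool) (sv : Fin nt → Bool) (j : Fin k) :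
    mirrorAdversary j₀ ω sv j ∈ Set.Icc (0 : ℝ) 1 := by
  unfold mirrorAdversary
  rcases eq_or_ne j j₀ with rfl | h <;> cases ω <;> norm_num [*]

variable (i₀ : Fin nt)

theorem ciReports_mirror_true :
    ciReports (1 / 2) (pointMasses fun _ => true) (pointMasses (update (fun _ => true) i₀ false))
      (fun _ => true) = update (fun _ => 1 / 2) i₀ 1 := by
  funext i
  rw [ciReports_pointMasses_left (by norm_num)]
  rcases eq_or_ne i i₀ with rfl | h <;> simp [*]

theorem ciReports_mirror_false :
    ciReports (1 / 2) (pointMasses fun _ => true) (pointMasses (update (fun _ => true) i₀ false))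
      (update (fun _ => true) i₀ false) = update (fun _ => 1 / 2) i₀ 0 := by
  funext i
  rw [ciReports_pointMasses_right]
  rcases eq_or_ne i i₀ with rfl | h <;> simp [*]

theorem ciLoss_sub_ciBench_mirror_ge (j₀ : Fin k) (f : (Fin (nt + k) → ℝ) → ℝ)
    (hf : ∀ (π : Equiv.Perm (Fin (nt + k))) (x : Fin (nt + k) → ℝ), f (x ∘ π) = f x) :
    1 / 4 ≤ ciLoss (1 / 2) (pointMasses fun _ => true)
        (pointMasses (update (fun _ => true) i₀ false)) f (mirrorAdversary j₀) -
      ciBench (1 / 2) (pointMasses fun _ => true) (pointMasses (update (fun _ => true) i₀ false)) := by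
  have hbench : ciBench (1 / 2) (pointMasses fun _ => true)
      (pointMasses (update (fun _ => true) i₀ false)) ≤ 0 := by
    refine (ciBench_le_ciTruthfulLoss (by norm_num) (by norm_num) (pointMasses_nonneg _)
      (pointMasses_nonneg _) (fun r => r i₀)).trans_eq ?_
    rw [ciTruthfulLoss_pointMasses, ciReports_mirror_true, ciReports_mirror_false]
    simp
  set x := Fin.append (update (fun _ => (1 / 2 : ℝ)) i₀ 1) (update (fun _ => 1 / 2) j₀ 0)
  have hswap :
      f (Fin.append (update (fun _ => 1 / 2) i₀ 0) (update (fun _ => 1 / 2) j₀ 1)) = f x := by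
    rw [← hf (Equiv.swap (Fin.castAdd k i₀) (Fin.natAdd nt j₀)) x,
      Fin.append_comp_swap_castAdd_natAdd]
    simp
  rw [ciLoss_pointMasses, ciReports_mirror_true, ciReports_mirror_false]
  simp only [mirrorAdversary, if_true, Bool.false_eq_true, if_false, hswap]
  nlinarith [sq_nonneg (f x - 1 / 2)]

end Mirror

/-- In the conditionally independent binary-state setting with L2
loss, posterior reports, and at least one omniscient adversary (`k ≥ 1`), the
minimax regret equals `1/4` for every number of experts: the constant aggregator
`1/2` guarantees regret at most `1/4` against every conditionally independent
information structure and adversarial strategy, and every anonymous aggregator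
suffers regret at least `1/4` against some of them. -/
theorem stmt_17 (nt k : ℕ) (hnt : 1 ≤ nt) (hk : 1 ≤ k) :
    -- the random guess guarantees regret at most 1/4:
    (∀ (S : Type) (_ : Fintype S) (μ : ℝ) (P1 P0 : Fin nt → S → ℝ)
        (σ : Bool → (Fin nt → S) → Fin k → ℝ),
      0 ≤ μ → μ ≤ 1 →
      (∀ i s, 0 ≤ P1 i s) → (∀ i, ∑ s, P1 i s = 1) →
      (∀ i s, 0 ≤ P0 i s) → (∀ i, ∑ s, P0 i s = 1) →
      (∀ ω sv j, σ ω sv j ∈ Set.Icc (0:ℝ) 1) →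
      ciLoss μ P1 P0 (fun _ => (1:ℝ) / 2) σ - ciBench μ P1 P0 ≤ 1 / 4) ∧
    -- and no anonymous aggregator can guarantee less:
    (∀ f : (Fin (nt + k) → ℝ) → ℝ,
      (∀ x : Fin (nt + k) → ℝ, (∀ i, x i ∈ Set.Icc (0:ℝ) 1) →
        f x ∈ Set.Icc (0:ℝ) 1) →
      (∀ (π : Equiv.Perm (Fin (nt + k))) (x : Fin (nt + k) → ℝ),
        f (x ∘ π) = f x) →
      ∃ (S : Type) (_ : Fintype S) (μ : ℝ) (P1 P0 : Fin nt → S → ℝ)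
        (σ : Bool → (Fin nt → S) → Fin k → ℝ),
        0 ≤ μ ∧ μ ≤ 1 ∧
        (∀ i s, 0 ≤ P1 i s) ∧ (∀ i, ∑ s, P1 i s = 1) ∧
        (∀ i s, 0 ≤ P0 i s) ∧ (∀ i, ∑ s, P0 i s = 1) ∧
        (∀ ω sv j, σ ω sv j ∈ Set.Icc (0:ℝ) 1) ∧
        1 / 4 ≤ ciLoss μ P1 P0 f σ - ciBench μ P1 P0) := by
  refine ⟨fun S _ μ P1 P0 σ hμ0 hμ1 hP1 hP1sum hP0 hP0sum _ => ?_, fun f _ hf => ?_⟩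
  · rw [ciLoss_const hP1sum hP0sum]
    linarith [ciBench_nonneg hμ0 hμ1 hP1 hP0]
  · exact ⟨Bool, inferInstance, 1 / 2, pointMasses fun _ => true,
      pointMasses (update (fun _ => true) ⟨0, hnt⟩ false), mirrorAdversary ⟨0, hk⟩,
      by norm_num, by norm_num, pointMasses_nonneg _, sum_pointMasses _, pointMasses_nonneg _,
      sum_pointMasses _, mirrorAdversary_mem_Icc _, ciLoss_sub_ciBench_mirror_ge _ _ f hf⟩
end
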